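/- arXiv:1808.04879 — 2 statements merged into one kernel-verified Lean document; each statement's English description precedes it below -/
import Mathlib

section
/- (Robustness of the smoothness metric, Case C_i > C_e.) Let S⁽ⁱ⁾, S⁽ⁿ⁾ ∈ ℝ^N be such that the noise vector n = S⁽ⁿ⁾ − S⁽ⁱ⁾ has exactly n_f nonzero entries, each equal to 2A or −2A, where A > 0. Write C_i = SM(S⁽ⁱ⁾) and suppose C_i > C_e. If n_f < (C_i − C_e)/(2·A·D^{3/2}·√Δ + 2·A·√(Δ·D)), then SM(S⁽ⁿ⁾) > C_e; i.e., the smoothness of the noisy signal remains above the upper endpoint C_e of the random-failure prediction interval, guaranteeing correct detection of the epidemic. -/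
/-!
At a vertex `i`, the local term `√(∑ⱼ a(i,j)·(S j − S i)²)` is a weighted ℓ² norm, so by
Minkowski's inequality it changes by at most the weighted ℓ² norm of the noise at the neighbours
plus `|n i|·√(∑ⱼ a(i,j))`. Bounding ℓ² by ℓ¹ and using that every vertex has at most `D`
neighbours, all of weight at most `Δ`, makes `SM` Lipschitz for the ℓ¹ norm with constant
`D·√Δ + √(Δ·D)`. The noise has ℓ¹ norm `2A·n_f` and `D ≤ D^{3/2}`, so
`SM(Sⁿ) ≥ SM(Sⁱ) − n_f·(2A·D^{3/2}·√Δ + 2A·√(Δ·D)) > C_e`.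
-/

open scoped Classical

/-- The smoothness of a graph signal `S ∈ ℝ^N` with respect to the weighted adjacency
matrix `a`: `SM(S) = ∑_{i} (∑_{j} a(i,j)·(S(j) − S(i))²)^{1/2}`. -/
noncomputable def smoothness (N : ℕ) (a : ℕ → ℕ → ℝ) (S : ℕ → ℝ) : ℝ :=
  ∑ i ∈ Finset.range N, Real.sqrt (∑ j ∈ Finset.range N, a i j * (S j - S i) ^ 2)

open Finset

section WeightedSums

variable {ι : Type*} {s : Finset ι} {w : ι → ℝ}

theorem sqrt_sum_mul_add_sq_le (hw : ∀ j ∈ s, 0 ≤ w j) (f g : ι → ℝ) :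
    √(∑ j ∈ s, w j * (f j + g j) ^ 2) ≤
      √(∑ j ∈ s, w j * f j ^ 2) + √(∑ j ∈ s, w j * g j ^ 2) := by
  have hsq : ∀ h : ι → ℝ, ∑ j ∈ s, (√(w j) * h j) ^ 2 = ∑ j ∈ s, w j * h j ^ 2 :=
    fun h ↦ sum_congr rfl fun j hj ↦ by rw [mul_pow, Real.sq_sqrt (hw j hj)]
  have cauchy_schwarz : ∑ j ∈ s, w j * f j * g j ≤
      √(∑ j ∈ s, w j * f j ^ 2) * √(∑ j ∈ s, w j * g j ^ 2) := by
    rw [← hsq f, ← hsq g]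
    refine le_of_eq_of_le (sum_congr rfl fun j hj ↦ ?_) (Real.sum_mul_le_sqrt_mul_sqrt _ _ _)
    linear_combination (f j * g j) * (Real.mul_self_sqrt (hw j hj)).symm
  have hf : 0 ≤ ∑ j ∈ s, w j * f j ^ 2 := sum_nonneg fun j hj ↦ by have := hw j hj; positivity
  have hg : 0 ≤ ∑ j ∈ s, w j * g j ^ 2 := sum_nonneg fun j hj ↦ by have := hw j hj; positivity
  rw [Real.sqrt_le_left (by positivity), add_sq, Real.sq_sqrt hf, Real.sq_sqrt hg]
  have expand : ∑ j ∈ s, w j * (f j + g j) ^ 2 = ∑ j ∈ s, w j * f j ^ 2 +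
      2 * ∑ j ∈ s, w j * f j * g j + ∑ j ∈ s, w j * g j ^ 2 := by
    rw [mul_sum, ← sum_add_distrib, ← sum_add_distrib]
    exact sum_congr rfl fun j _ ↦ by ring
  linarith

theorem sqrt_sum_sq_le_sum_of_nonneg {f : ι → ℝ} (hf : ∀ j ∈ s, 0 ≤ f j) :
    √(∑ j ∈ s, f j ^ 2) ≤ ∑ j ∈ s, f j :=
  (Real.sqrt_le_left (sum_nonneg hf)).2 (sum_sq_le_sq_sum_of_nonneg hf)

theorem sqrt_sum_mul_sub_sq_le (hw : ∀ j ∈ s, 0 ≤ w j) (x y : ι → ℝ) (c d : ℝ) :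
    √(∑ j ∈ s, w j * (x j - c) ^ 2) ≤ √(∑ j ∈ s, w j * (y j - d) ^ 2) +
      ∑ j ∈ s, √(w j) * |x j - y j| + |c - d| * √(∑ j ∈ s, w j) := by
  have split : ∀ j, x j - c = (y j - d) + ((x j - y j) + (d - c)) := fun j ↦ by ring
  have outer := sqrt_sum_mul_add_sq_le hw (fun j ↦ y j - d) fun j ↦ (x j - y j) + (d - c)
  have inner := sqrt_sum_mul_add_sq_le hw (fun j ↦ x j - y j) fun _ ↦ d - c
  simp only [← split] at outer
  have hdiff : √(∑ j ∈ s, w j * (x j - y j) ^ 2) ≤ ∑ j ∈ s, √(w j) * |x j - y j| := by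
    refine le_of_eq_of_le ?_ (sqrt_sum_sq_le_sum_of_nonneg fun j _ ↦ by positivity)
    refine congr_arg _ (sum_congr rfl fun j hj ↦ ?_)
    rw [mul_pow, Real.sq_sqrt (hw j hj), sq_abs]
  have hconst : √(∑ j ∈ s, w j * (d - c) ^ 2) = |c - d| * √(∑ j ∈ s, w j) := by
    rw [← sum_mul, Real.sqrt_mul' _ (sq_nonneg _), Real.sqrt_sq_eq_abs, abs_sub_comm, mul_comm]
  linarith

theorem sum_le_card_filter_ne_zero_mul {f : ι → ℝ} {M : ℝ} (hf : ∀ j ∈ s, f j ≤ M) :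
    ∑ j ∈ s, f j ≤ #(s.filter (f · ≠ 0)) * M := by
  rw [← sum_filter_ne_zero, ← nsmul_eq_mul]
  exact sum_le_card_nsmul _ _ _ fun j hj ↦ hf j (mem_filter.1 hj).1

end WeightedSums

section Graph

variable {N : ℕ} {a : ℕ → ℕ → ℝ} {Δ D : ℝ}

theorem sum_row_le_mul (hnn : ∀ i j, 0 ≤ a i j) (haΔ : ∀ i j, a i j ≤ Δ)
    (hdeg : ∀ i ∈ Finset.range N,
      ((((Finset.range N).filter (fun j => a i j ≠ 0)).card : ℝ)) ≤ D)
    {i : ℕ} (hi : i ∈ range N) :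
    ∑ j ∈ range N, a i j ≤ D * Δ :=
  (sum_le_card_filter_ne_zero_mul fun j _ ↦ haΔ i j).trans <|
    mul_le_mul_of_nonneg_right (hdeg i hi) ((hnn i i).trans (haΔ i i))

theorem sum_sqrt_column_le_mul (hsymm : ∀ i j, a i j = a j i) (hnn : ∀ i j, 0 ≤ a i j)
    (haΔ : ∀ i j, a i j ≤ Δ)
    (hdeg : ∀ i ∈ Finset.range N,
      ((((Finset.range N).filter (fun j => a i j ≠ 0)).card : ℝ)) ≤ D)
    {j : ℕ} (hj : j ∈ range N) :
    ∑ i ∈ range N, √(a i j) ≤ D * √Δ := by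
  have hsupport : (range N).filter (fun i ↦ √(a j i) ≠ 0) = (range N).filter (a j · ≠ 0) :=
    filter_congr fun i _ ↦ by rw [Real.sqrt_ne_zero', (hnn j i).lt_iff_ne', ne_comm]
  simp only [hsymm _ j]
  refine (sum_le_card_filter_ne_zero_mul fun i _ ↦ Real.sqrt_le_sqrt (haΔ j i)).trans ?_
  rw [hsupport]
  exact mul_le_mul_of_nonneg_right (hdeg j hj) (Real.sqrt_nonneg _)

theorem smoothness_le_add_mul_sum_abs_sub (hsymm : ∀ i j, a i j = a j i)
    (hnn : ∀ i j, 0 ≤ a i j) (haΔ : ∀ i j, a i j ≤ Δ)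
    (hdeg : ∀ i ∈ Finset.range N,
      ((((Finset.range N).filter (fun j => a i j ≠ 0)).card : ℝ)) ≤ D)
    (S T : ℕ → ℝ) :
    smoothness N a S ≤ smoothness N a T +
      (D * √Δ + √(Δ * D)) * ∑ i ∈ range N, |S i - T i| := by
  have vertex (i : ℕ) :=
    sqrt_sum_mul_sub_sq_le (s := range N) (fun j _ ↦ hnn i j) S T (S i) (T i)
  have neighbours : ∑ i ∈ range N, ∑ j ∈ range N, √(a i j) * |S j - T j| ≤
      D * √Δ * ∑ j ∈ range N, |S j - T j| := by
    rw [sum_comm, mul_sum]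
    refine sum_le_sum fun j hj ↦ ?_
    rw [← sum_mul]
    exact mul_le_mul_of_nonneg_right
      (sum_sqrt_column_le_mul hsymm hnn haΔ hdeg hj) (abs_nonneg _)
  have self : ∑ i ∈ range N, |S i - T i| * √(∑ j ∈ range N, a i j) ≤
      √(Δ * D) * ∑ i ∈ range N, |S i - T i| := by
    rw [mul_sum]
    refine sum_le_sum fun i hi ↦ ?_
    rw [mul_comm, mul_comm Δ]
    exact mul_le_mul_of_nonneg_right
      (Real.sqrt_le_sqrt (sum_row_le_mul hnn haΔ hdeg hi)) (abs_nonneg _)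
  have total := sum_le_sum fun i (_ : i ∈ range N) ↦ vertex i
  simp only [sum_add_distrib] at total
  unfold smoothness
  linarith

end Graph

theorem smoothness_robust_above_general (N : ℕ) (a : ℕ → ℕ → ℝ)
    (hsymm : ∀ i j, a i j = a j i) (hnn : ∀ i j, 0 ≤ a i j)
    (Δ : ℝ) (hΔ : 0 < Δ) (haΔ : ∀ i j, a i j ≤ Δ)
    (D : ℝ) (hD : 1 ≤ D)
    (hdeg : ∀ i ∈ Finset.range N,
      ((((Finset.range N).filter (fun j => a i j ≠ 0)).card : ℝ)) ≤ D)
    (A : ℝ) (hA : 0 < A) (nf : ℕ)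
    (Si Sn : ℕ → ℝ)
    (F : Finset ℕ) (hFsub : F ⊆ Finset.range N) (hFcard : F.card = nf)
    (hFval : ∀ k ∈ F, Sn k - Si k = 2 * A ∨ Sn k - Si k = -(2 * A))
    (hF0 : ∀ k ∈ Finset.range N, k ∉ F → Sn k = Si k)
    (Ce : ℝ)
    (hnf : (nf : ℝ) < (smoothness N a Si - Ce) /
      (2 * A * D ^ ((3 : ℝ) / 2) * Real.sqrt Δ + 2 * A * Real.sqrt (Δ * D))) :
    smoothness N a Sn > Ce := by
  have hD32 : D ≤ D ^ ((3 : ℝ) / 2) := Real.self_le_rpow_of_one_le hD (by norm_num)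
  have hnoise : ∑ i ∈ range N, |Si i - Sn i| = nf * (2 * A) := by
    rw [← sum_subset hFsub fun i hi hiF ↦ by rw [hF0 i hi hiF, sub_self, abs_zero],
      sum_congr rfl fun k hk ↦ ?_, sum_const, hFcard, nsmul_eq_mul]
    rcases hFval k hk with h | h <;> rw [abs_sub_comm, h] <;> simp [hA.le]
  have hgap := (lt_div_iff₀ (by positivity)).1 hnf
  have hlip := smoothness_le_add_mul_sum_abs_sub hsymm hnn haΔ hdeg Si Sn
  rw [hnoise] at hlip
  have hD' : D * √Δ * (nf * (2 * A)) ≤ D ^ ((3 : ℝ) / 2) * √Δ * (nf * (2 * A)) := by gcongr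
  linarith

/-- **Robustness of the smoothness metric, Case `C_i > C_e`.**
If the noise vector `n = Sⁿ − Sⁱ` has exactly `n_f` nonzero entries, each equal to
`2A` or `−2A` with `A > 0`, `C_i = SM(Sⁱ) > C_e`, and
`n_f < (C_i − C_e)/(2·A·D^{3/2}·√Δ + 2·A·√(Δ·D))`, then `SM(Sⁿ) > C_e`. -/
theorem smoothness_robust_above (N : ℕ) (hN : 1 ≤ N) (a : ℕ → ℕ → ℝ)
    (hsymm : ∀ i j, a i j = a j i) (hnn : ∀ i j, 0 ≤ a i j)
    (hdiag : ∀ i, a i i = 0)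
    (Δ : ℝ) (hΔ : 0 < Δ) (haΔ : ∀ i j, a i j ≤ Δ)
    (D : ℝ) (hD : 1 ≤ D)
    (hdeg : ∀ i ∈ Finset.range N,
      ((((Finset.range N).filter (fun j => a i j ≠ 0)).card : ℝ)) ≤ D)
    (A : ℝ) (hA : 0 < A) (nf : ℕ)
    (Si Sn : ℕ → ℝ)
    (F : Finset ℕ) (hFsub : F ⊆ Finset.range N) (hFcard : F.card = nf)
    (hFval : ∀ k ∈ F, Sn k - Si k = 2 * A ∨ Sn k - Si k = -(2 * A))
    (hF0 : ∀ k ∈ Finset.range N, k ∉ F → Sn k = Si k)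
    (Ce : ℝ) (hCi : Ce < smoothness N a Si)
    (hnf : (nf : ℝ) < (smoothness N a Si - Ce) /
      (2 * A * D ^ ((3 : ℝ) / 2) * Real.sqrt Δ + 2 * A * Real.sqrt (Δ * D))) :
    smoothness N a Sn > Ce :=
  smoothness_robust_above_general N a hsymm hnn Δ hΔ haΔ D hD hdeg A hA nf Si Sn F hFsub hFcard
    hFval hF0 Ce hnf
end

section
/- (Robustness of the smoothness metric, Case C_i < C_s.) Let S⁽ⁱ⁾, S⁽ⁿ⁾ ∈ ℝ^N be such that the noise vector n = S⁽ⁿ⁾ − S⁽ⁱ⁾ has exactly n_f nonzero entries, each equal to 2A or −2A, where A > 0. Write C_i = SM(S⁽ⁱ⁾) and suppose C_i < C_s. If n_f < (C_s − C_i)/(2·A·D^{3/2}·√Δ + 2·A·√(Δ·D)), then SM(S⁽ⁿ⁾) < C_s; i.e., the smoothness of the noisy signal remains below the lower endpoint C_s of the random-failure prediction interval, guaranteeing correct detection of the epidemic. -/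
/-!
Smoothness is subadditive, since at every node it is a weighted `ℓ²` norm of the differences
(Minkowski), so `SM(Sⁿ) ≤ SM(Sⁱ) + SM(n)`. Bounding each node's `ℓ²` norm by the `ℓ¹` norm and
using the symmetry of `a` gives `SM(n) ≤ 2 ∑ₖ |n(k)| ∑ⱼ √a(k,j) ≤ 4·A·D·√Δ·n_f`, and
`2D ≤ D^{3/2} + D^{1/2}` (AM-GM) bounds this by `n_f` times the denominator in the hypothesis.
-/

open scoped Classical

open Finset

namespace Real

variable {ι : Type*} (s : Finset ι)

theorem sqrt_sum_le_sum_sqrt {f : ι → ℝ} (hf : ∀ i ∈ s, 0 ≤ f i) :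
    √(∑ i ∈ s, f i) ≤ ∑ i ∈ s, √(f i) := by
  refine (sqrt_le_left (sum_nonneg fun i _ => sqrt_nonneg _)).2 ?_
  calc ∑ i ∈ s, f i = ∑ i ∈ s, √(f i) ^ 2 := sum_congr rfl fun i hi => (sq_sqrt (hf i hi)).symm
    _ ≤ (∑ i ∈ s, √(f i)) ^ 2 := sum_sq_le_sq_sum_of_nonneg fun i _ => sqrt_nonneg _

theorem sqrt_sum_mul_add_sq_le {w : ι → ℝ} (hw : ∀ i ∈ s, 0 ≤ w i) (f g : ι → ℝ) :
    √(∑ i ∈ s, w i * (f i + g i) ^ 2) ≤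
      √(∑ i ∈ s, w i * f i ^ 2) + √(∑ i ∈ s, w i * g i ^ 2) := by
  have hsq : ∀ h : ι → ℝ, ∑ i ∈ s, (√(w i) * h i) ^ 2 = ∑ i ∈ s, w i * h i ^ 2 :=
    fun h => sum_congr rfl fun i hi => by rw [mul_pow, sq_sqrt (hw i hi)]
  have cauchy_schwarz : ∑ i ∈ s, w i * f i * g i ≤
      √(∑ i ∈ s, w i * f i ^ 2) * √(∑ i ∈ s, w i * g i ^ 2) := by
    rw [← hsq f, ← hsq g]
    refine (sum_congr rfl fun i hi => ?_).trans_le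
      (sum_mul_le_sqrt_mul_sqrt s (fun i => √(w i) * f i) fun i => √(w i) * g i)
    linear_combination (f i * g i) * (sq_sqrt (hw i hi)).symm
  have hf : 0 ≤ ∑ i ∈ s, w i * f i ^ 2 := sum_nonneg fun i hi => mul_nonneg (hw i hi) (sq_nonneg _)
  have hg : 0 ≤ ∑ i ∈ s, w i * g i ^ 2 := sum_nonneg fun i hi => mul_nonneg (hw i hi) (sq_nonneg _)
  refine (sqrt_le_left (by positivity)).2 ?_
  calc ∑ i ∈ s, w i * (f i + g i) ^ 2
      = ∑ i ∈ s, w i * f i ^ 2 + ∑ i ∈ s, w i * g i ^ 2 + 2 * ∑ i ∈ s, w i * f i * g i := by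
        simp only [mul_sum, ← sum_add_distrib]; exact sum_congr rfl fun i _ => by ring
    _ ≤ _ := by nlinarith [sq_sqrt hf, sq_sqrt hg]

end Real

theorem Finset.sum_le_card_filter_ne_zero_mul {ι R : Type*} [Semiring R] [Preorder R]
    [AddLeftMono R] (s : Finset ι) {f : ι → R} {c : R}
    (h : ∀ i ∈ s, f i ≤ c) : ∑ i ∈ s, f i ≤ #{i ∈ s | f i ≠ 0} * c := by
  rw [← sum_filter_ne_zero, ← nsmul_eq_mul]
  exact sum_le_card_nsmul _ _ _ fun i hi => h i (mem_filter.1 hi).1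

section smoothness

variable {N : ℕ} {a : ℕ → ℕ → ℝ}

theorem smoothness_add_le (hnn : ∀ i j, 0 ≤ a i j) (S T : ℕ → ℝ) :
    smoothness N a (S + T) ≤ smoothness N a S + smoothness N a T := by
  rw [smoothness, smoothness, smoothness, ← sum_add_distrib]
  refine sum_le_sum fun i _ => ?_
  refine (congrArg Real.sqrt (sum_congr rfl fun j _ => ?_)).trans_le
    (Real.sqrt_sum_mul_add_sq_le _ (fun j _ => hnn i j) (fun j => S j - S i) fun j => T j - T i)
  simp only [Pi.add_apply]; ring

theorem smoothness_le_two_mul_sum_abs_mul_sum_sqrt (hsymm : ∀ i j, a i j = a j i)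
    (hnn : ∀ i j, 0 ≤ a i j) (S : ℕ → ℝ) :
    smoothness N a S ≤ 2 * ∑ i ∈ range N, |S i| * ∑ j ∈ range N, √(a i j) := by
  calc smoothness N a S
      ≤ ∑ i ∈ range N, ∑ j ∈ range N, √(a i j) * |S j - S i| := by
        refine sum_le_sum fun i _ => (Real.sqrt_sum_le_sum_sqrt _
          fun j _ => mul_nonneg (hnn i j) (sq_nonneg _)).trans_eq (sum_congr rfl fun j _ => ?_)
        rw [Real.sqrt_mul (hnn i j), Real.sqrt_sq_eq_abs]
    _ ≤ ∑ i ∈ range N, ∑ j ∈ range N, (√(a j i) * |S j| + √(a i j) * |S i|) := by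
        gcongr with i _ j _
        rw [hsymm j i, ← mul_add]
        exact mul_le_mul_of_nonneg_left (abs_sub _ _) (Real.sqrt_nonneg _)
    _ = 2 * ∑ i ∈ range N, |S i| * ∑ j ∈ range N, √(a i j) := by
        simp only [sum_add_distrib]
        rw [sum_comm, two_mul]
        simp only [mul_comm (|_|), sum_mul]

theorem smoothness_le_of_support_subset (hsymm : ∀ i j, a i j = a j i)
    (hnn : ∀ i j, 0 ≤ a i j) {Δ : ℝ} (haΔ : ∀ i j, a i j ≤ Δ) {D : ℝ}
    (hdeg : ∀ i ∈ range N, (#{j ∈ range N | a i j ≠ 0} : ℝ) ≤ D)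
    {S : ℕ → ℝ} {F : Finset ℕ} (hFsub : F ⊆ range N) (hS0 : ∀ k ∈ range N, k ∉ F → S k = 0)
    {M : ℝ} (hSM : ∀ k ∈ F, |S k| ≤ M) :
    smoothness N a S ≤ #F * (2 * M * (D * √Δ)) := by
  have hrow : ∀ k ∈ range N, ∑ j ∈ range N, √(a k j) ≤ D * √Δ := fun k hk => calc
    _ ≤ #{j ∈ range N | √(a k j) ≠ 0} * √Δ :=
        sum_le_card_filter_ne_zero_mul _ fun j _ => Real.sqrt_le_sqrt (haΔ k j)
    _ = #{j ∈ range N | a k j ≠ 0} * √Δ := by simp_rw [ne_eq, Real.sqrt_eq_zero (hnn k _)]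
    _ ≤ D * √Δ := by gcongr; exact hdeg k hk
  calc smoothness N a S
      ≤ 2 * ∑ k ∈ range N, |S k| * ∑ j ∈ range N, √(a k j) :=
        smoothness_le_two_mul_sum_abs_mul_sum_sqrt hsymm hnn S
    _ = 2 * ∑ k ∈ F, |S k| * ∑ j ∈ range N, √(a k j) := by
        rw [sum_subset hFsub fun k hk hkF => by rw [hS0 k hk hkF, abs_zero, zero_mul]]
    _ ≤ 2 * ∑ k ∈ F, M * (D * √Δ) := by
        gcongr 2 * ?_
        exact sum_le_sum fun k hk => mul_le_mul (hSM k hk) (hrow k (hFsub hk))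
          (sum_nonneg fun _ _ => Real.sqrt_nonneg _) ((abs_nonneg _).trans (hSM k hk))
    _ = #F * (2 * M * (D * √Δ)) := by rw [sum_const, nsmul_eq_mul]; ring

end smoothness

theorem two_mul_le_rpow_three_halves_add_sqrt {x : ℝ} (hx : 0 ≤ x) :
    2 * x ≤ x ^ ((3 : ℝ) / 2) + √x := by
  have h : x ^ ((3 : ℝ) / 2) = √x ^ 3 := by
    rw [Real.sqrt_eq_rpow, ← Real.rpow_natCast, ← Real.rpow_mul hx]
    norm_num
  nlinarith [Real.sq_sqrt hx, mul_nonneg (Real.sqrt_nonneg x) (sq_nonneg (√x - 1))]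

theorem smoothness_robust_below_general (N : ℕ) (a : ℕ → ℕ → ℝ)
    (hsymm : ∀ i j, a i j = a j i) (hnn : ∀ i j, 0 ≤ a i j)
    (Δ : ℝ) (hΔ : 0 < Δ) (haΔ : ∀ i j, a i j ≤ Δ)
    (D : ℝ) (hD : 1 ≤ D)
    (hdeg : ∀ i ∈ Finset.range N,
      ((((Finset.range N).filter (fun j => a i j ≠ 0)).card : ℝ)) ≤ D)
    (A : ℝ) (hA : 0 < A) (nf : ℕ)
    (Si Sn : ℕ → ℝ)
    (F : Finset ℕ) (hFsub : F ⊆ Finset.range N) (hFcard : F.card = nf)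
    (hFval : ∀ k ∈ F, Sn k - Si k = 2 * A ∨ Sn k - Si k = -(2 * A))
    (hF0 : ∀ k ∈ Finset.range N, k ∉ F → Sn k = Si k)
    (Cs : ℝ)
    (hnf : (nf : ℝ) < (Cs - smoothness N a Si) /
      (2 * A * D ^ ((3 : ℝ) / 2) * Real.sqrt Δ + 2 * A * Real.sqrt (Δ * D))) :
    smoothness N a Sn < Cs := by
  have hnoise : smoothness N a (Sn - Si) ≤ nf * (2 * (2 * A) * (D * √Δ)) := by
    rw [← hFcard]
    refine smoothness_le_of_support_subset hsymm hnn haΔ hdeg hFsub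
      (fun k hk hkF => sub_eq_zero.2 (hF0 k hk hkF)) fun k hk => ?_
    rcases hFval k hk with h | h <;> simp [h, abs_of_pos hA]
  have hconst : 2 * (2 * A) * (D * √Δ) ≤
      2 * A * D ^ ((3 : ℝ) / 2) * √Δ + 2 * A * √(Δ * D) := by
    have := two_mul_le_rpow_three_halves_add_sqrt (zero_le_one.trans hD)
    rw [Real.sqrt_mul hΔ.le]
    nlinarith [mul_le_mul_of_nonneg_left this (by positivity : 0 ≤ 2 * A * √Δ)]
  have hpos : 0 < 2 * A * D ^ ((3 : ℝ) / 2) * √Δ + 2 * A * √(Δ * D) := by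
    have : 0 < D := zero_lt_one.trans_le hD
    positivity
  calc smoothness N a Sn = smoothness N a (Si + (Sn - Si)) := by rw [add_sub_cancel]
    _ ≤ smoothness N a Si + smoothness N a (Sn - Si) := smoothness_add_le hnn _ _
    _ ≤ smoothness N a Si + nf * (2 * A * D ^ ((3 : ℝ) / 2) * √Δ + 2 * A * √(Δ * D)) := by
        gcongr; exact hnoise.trans (by gcongr)
    _ < Cs := by linarith [(lt_div_iff₀ hpos).1 hnf]

/-- **Robustness of the smoothness metric, Case `C_i < C_s`.**
If the noise vector `n = Sⁿ − Sⁱ` has exactly `n_f` nonzero entries, each equal to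
`2A` or `−2A` with `A > 0`, `C_i = SM(Sⁱ) < C_s`, and
`n_f < (C_s − C_i)/(2·A·D^{3/2}·√Δ + 2·A·√(Δ·D))`, then `SM(Sⁿ) < C_s`. -/
theorem smoothness_robust_below (N : ℕ) (hN : 1 ≤ N) (a : ℕ → ℕ → ℝ)
    (hsymm : ∀ i j, a i j = a j i) (hnn : ∀ i j, 0 ≤ a i j)
    (hdiag : ∀ i, a i i = 0)
    (Δ : ℝ) (hΔ : 0 < Δ) (haΔ : ∀ i j, a i j ≤ Δ)
    (D : ℝ) (hD : 1 ≤ D)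
    (hdeg : ∀ i ∈ Finset.range N,
      ((((Finset.range N).filter (fun j => a i j ≠ 0)).card : ℝ)) ≤ D)
    (A : ℝ) (hA : 0 < A) (nf : ℕ)
    (Si Sn : ℕ → ℝ)
    (F : Finset ℕ) (hFsub : F ⊆ Finset.range N) (hFcard : F.card = nf)
    (hFval : ∀ k ∈ F, Sn k - Si k = 2 * A ∨ Sn k - Si k = -(2 * A))
    (hF0 : ∀ k ∈ Finset.range N, k ∉ F → Sn k = Si k)
    (Cs : ℝ) (hCi : smoothness N a Si < Cs)
    (hnf : (nf : ℝ) < (Cs - smoothness N a Si) /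
      (2 * A * D ^ ((3 : ℝ) / 2) * Real.sqrt Δ + 2 * A * Real.sqrt (Δ * D))) :
    smoothness N a Sn < Cs :=
  smoothness_robust_below_general N a hsymm hnn Δ hΔ haΔ D hD hdeg A hA nf Si Sn F hFsub hFcard
    hFval hF0 Cs hnf
end
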